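/- Let C be a set of strictly increasing integer vectors (of possibly different lengths). Suppose d_a(x, y) > t_r + t_l for all distinct x, y ∈ C of the same length (where d_a(x,y) = max{Σ_i (x_i - y_i)^+, Σ_i (x_i - y_i)^-}). Then for all distinct x, y ∈ C of the same length W and all f, g ∈ Z^W with Σ_i f_i^+ ≤ t_r, Σ_i f_i^- ≤ t_l, Σ_i g_i^+ ≤ t_r, Σ_i g_i^- ≤ t_l, one has x + f ≠ y + g. Conversely, if d_a(x,y) ≤ t_r + t_l for some distinct same-length x, y ∈ C, then such f, g with x + f = y + g exist. -/

import Mathlib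

/-- The asymmetric distance on `ℤ^W`. -/
def da (W : ℕ) (x y : Fin W → ℤ) : ℤ :=
  max (∑ i, max (x i - y i) 0) (∑ i, max (y i - x i) 0)

/-! `x + f = y + g` means `x - y = g - f`. Since `(g - f)⁺ ≤ g⁺ + f⁻`, such `f`, `g` force
`Σ (x - y)⁺ ≤ t_r + t_l`, and symmetrically `Σ (y - x)⁺ ≤ t_r + t_l`. Conversely, split `(x - y)⁺`
into nonnegative parts of masses `≤ t_r` and `≤ t_l`, carried by `g` and by `-f`, and `(y - x)⁺`
likewise between `f` and `-g`; such a split exists by shrinking coordinates one at a time. -/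

section PositivePart

variable {ι α : Type*} [AddCommGroup α] [LinearOrder α] [IsOrderedAddMonoid α]

lemma max_sub_zero_le_add (a b : α) : max (a - b) 0 ≤ max a 0 + max (-b) 0 :=
  max_le (sub_eq_add_neg a b ▸ add_le_add (le_max_left _ _) (le_max_left _ _))
    (add_nonneg (le_max_right _ _) (le_max_right _ _))

lemma max_sub_zero_le_self {p n : α} (hp : 0 ≤ p) (hn : 0 ≤ n) : max (p - n) 0 ≤ p :=
  max_le (sub_le_self p hn) hp

lemma Finset.exists_nonneg_le_sum_eq [DecidableEq ι] (s : Finset ι) {v : ι → α} (hv : 0 ≤ v)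
    {c : α} (hc₀ : 0 ≤ c) (hc : c ≤ ∑ i ∈ s, v i) :
    ∃ p : ι → α, 0 ≤ p ∧ p ≤ v ∧ ∑ i ∈ s, p i = c := by
  induction s using Finset.induction_on generalizing c with
  | empty => exact ⟨0, le_rfl, hv, by simp_all [le_antisymm hc hc₀]⟩
  | insert i s hi ih =>
    rw [Finset.sum_insert hi] at hc
    have hrest : c - min (v i) c ≤ ∑ j ∈ s, v j := by
      rcases min_choice (v i) c with hm | hm
      · rw [hm]; exact sub_le_iff_le_add'.2 hc
      · rw [hm, sub_self]; exact Finset.sum_nonneg fun j _ => hv j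
    obtain ⟨p, hp₀, hpv, hps⟩ := ih (sub_nonneg.2 (min_le_right _ _)) hrest
    refine ⟨Function.update p i (min (v i) c), ?_, ?_, ?_⟩
    · intro j
      rcases eq_or_ne j i with rfl | hj
      · simpa using ⟨hv j, hc₀⟩
      · simpa [hj] using hp₀ j
    · intro j
      rcases eq_or_ne j i with rfl | hj
      · simp
      · simpa [hj] using hpv j
    · rw [Finset.sum_insert hi, Function.update_self, Finset.sum_update_of_notMem hi, hps,
        add_sub_cancel]

lemma exists_nonneg_add_eq_of_sum_le [Fintype ι] {v : ι → α} (hv : 0 ≤ v) {a b : α}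
    (ha : 0 ≤ a) (hb : 0 ≤ b) (h : ∑ i, v i ≤ a + b) :
    ∃ p q : ι → α, 0 ≤ p ∧ 0 ≤ q ∧ p + q = v ∧ ∑ i, p i ≤ a ∧ ∑ i, q i ≤ b := by
  classical
  obtain ⟨p, hp₀, hpv, hps⟩ := Finset.univ.exists_nonneg_le_sum_eq hv
    (le_min (Finset.sum_nonneg fun i _ => hv i) ha) (min_le_left _ a)
  refine ⟨p, v - p, hp₀, sub_nonneg.2 hpv, add_sub_cancel p v, hps ▸ min_le_right _ _, ?_⟩
  rw [Pi.sub_def, Finset.sum_sub_distrib, hps, sub_le_iff_le_add]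
  rcases min_choice (∑ i, v i) a with hm | hm <;> rw [hm]
  · exact le_add_of_nonneg_left hb
  · rwa [add_comm]

lemma Finset.sum_max_sub_zero_le (s : Finset ι) (f g : ι → α) :
    ∑ i ∈ s, max (g i - f i) 0 ≤ ∑ i ∈ s, max (g i) 0 + ∑ i ∈ s, max (-f i) 0 :=
  (Finset.sum_le_sum fun i _ => max_sub_zero_le_add (g i) (f i)).trans_eq Finset.sum_add_distrib

end PositivePart

section AsymmetricDistance

variable {W : ℕ} {x y : Fin W → ℤ} {tr tl : ℤ}

lemma da_le_of_add_eq_add {f g : Fin W → ℤ}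
    (hf_pos : ∑ i, max (f i) 0 ≤ tr) (hf_neg : ∑ i, max (-f i) 0 ≤ tl)
    (hg_pos : ∑ i, max (g i) 0 ≤ tr) (hg_neg : ∑ i, max (-g i) 0 ≤ tl) (h : x + f = y + g) :
    da W x y ≤ tr + tl := by
  have hxy : x - y = g - f := by rw [sub_eq_sub_iff_add_eq_add, h, add_comm]
  have hyx : y - x = f - g := by rw [← neg_sub, hxy, neg_sub]
  refine max_le ?_ ?_
  · simpa only [← Pi.sub_apply, hxy] using
      (Finset.univ.sum_max_sub_zero_le f g).trans (add_le_add hg_pos hf_neg)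
  · simpa only [← Pi.sub_apply, hyx] using
      (Finset.univ.sum_max_sub_zero_le g f).trans (add_le_add hf_pos hg_neg)

lemma exists_add_eq_add_of_da_le (htr : 0 ≤ tr) (htl : 0 ≤ tl) (h : da W x y ≤ tr + tl) :
    ∃ f g : Fin W → ℤ,
      ∑ i, max (f i) 0 ≤ tr ∧ ∑ i, max (-f i) 0 ≤ tl ∧
      ∑ i, max (g i) 0 ≤ tr ∧ ∑ i, max (-g i) 0 ≤ tl ∧ x + f = y + g := by
  obtain ⟨p₁, p₂, hp₁, hp₂, hp, hp₁s, hp₂s⟩ := exists_nonneg_add_eq_of_sum_le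
    (v := fun i => max (x i - y i) 0) (fun i => le_max_right _ _) htr htl
    ((le_max_left _ _).trans h)
  obtain ⟨n₁, n₂, hn₁, hn₂, hn, hn₁s, hn₂s⟩ := exists_nonneg_add_eq_of_sum_le
    (v := fun i => max (y i - x i) 0) (fun i => le_max_right _ _) htr htl
    ((le_max_right _ _).trans h)
  refine ⟨n₁ - p₂, p₁ - n₂, ?_, ?_, ?_, ?_, ?_⟩
  · exact (Finset.sum_le_sum fun i _ => max_sub_zero_le_self (hn₁ i) (hp₂ i)).trans hn₁s
  · simp only [Pi.sub_apply, neg_sub]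
    exact (Finset.sum_le_sum fun i _ => max_sub_zero_le_self (hp₂ i) (hn₁ i)).trans hp₂s
  · exact (Finset.sum_le_sum fun i _ => max_sub_zero_le_self (hp₁ i) (hn₂ i)).trans hp₁s
  · simp only [Pi.sub_apply, neg_sub]
    exact (Finset.sum_le_sum fun i _ => max_sub_zero_le_self (hn₂ i) (hp₁ i)).trans hn₂s
  · funext i
    have hpi := congrFun hp i
    have hni := congrFun hn i
    simp only [Pi.add_apply, Pi.sub_apply] at hpi hni ⊢
    omega

end AsymmetricDistance

theorem stmt16_general (tr tl : ℕ) (C : Set (Σ W : ℕ, Fin W → ℤ)) :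
    ((∀ x ∈ C, ∀ y ∈ C, x ≠ y → ∀ h : x.1 = y.1,
        ((tr : ℤ) + tl) < da x.1 x.2 (y.2 ∘ Fin.cast h)) →
      ∀ x ∈ C, ∀ y ∈ C, x ≠ y → ∀ h : x.1 = y.1, ∀ f g : Fin x.1 → ℤ,
        (∑ i, max (f i) 0) ≤ (tr : ℤ) → (∑ i, max (-f i) 0) ≤ (tl : ℤ) →
        (∑ i, max (g i) 0) ≤ (tr : ℤ) → (∑ i, max (-g i) 0) ≤ (tl : ℤ) →
        x.2 + f ≠ (y.2 ∘ Fin.cast h) + g) ∧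
    (∀ x ∈ C, ∀ y ∈ C, x ≠ y → ∀ h : x.1 = y.1,
      da x.1 x.2 (y.2 ∘ Fin.cast h) ≤ ((tr : ℤ) + tl) →
      ∃ f g : Fin x.1 → ℤ,
        (∑ i, max (f i) 0) ≤ (tr : ℤ) ∧ (∑ i, max (-f i) 0) ≤ (tl : ℤ) ∧
        (∑ i, max (g i) 0) ≤ (tr : ℤ) ∧ (∑ i, max (-g i) 0) ≤ (tl : ℤ) ∧
        x.2 + f = (y.2 ∘ Fin.cast h) + g) :=
  ⟨fun hfar x hx y hy hne h _ _ hf_pos hf_neg hg_pos hg_neg heq =>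
      (hfar x hx y hy hne h).not_ge (da_le_of_add_eq_add hf_pos hf_neg hg_pos hg_neg heq),
    fun _ _ _ _ _ _ hle => exists_add_eq_add_of_da_le (by positivity) (by positivity) hle⟩

theorem stmt16 (tr tl : ℕ) (C : Set (Σ W : ℕ, Fin W → ℤ))
    (hmono : ∀ c ∈ C, StrictMono c.2) :
    ((∀ x ∈ C, ∀ y ∈ C, x ≠ y → ∀ h : x.1 = y.1,
        ((tr : ℤ) + tl) < da x.1 x.2 (y.2 ∘ Fin.cast h)) →
      ∀ x ∈ C, ∀ y ∈ C, x ≠ y → ∀ h : x.1 = y.1, ∀ f g : Fin x.1 → ℤ,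
        (∑ i, max (f i) 0) ≤ (tr : ℤ) → (∑ i, max (-f i) 0) ≤ (tl : ℤ) →
        (∑ i, max (g i) 0) ≤ (tr : ℤ) → (∑ i, max (-g i) 0) ≤ (tl : ℤ) →
        x.2 + f ≠ (y.2 ∘ Fin.cast h) + g) ∧
    (∀ x ∈ C, ∀ y ∈ C, x ≠ y → ∀ h : x.1 = y.1,
      da x.1 x.2 (y.2 ∘ Fin.cast h) ≤ ((tr : ℤ) + tl) →
      ∃ f g : Fin x.1 → ℤ,
        (∑ i, max (f i) 0) ≤ (tr : ℤ) ∧ (∑ i, max (-f i) 0) ≤ (tl : ℤ) ∧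
        (∑ i, max (g i) 0) ≤ (tr : ℤ) ∧ (∑ i, max (-g i) 0) ≤ (tl : ℤ) ∧
        x.2 + f = (y.2 ∘ Fin.cast h) + g) :=
  stmt16_general tr tl C
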